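/- arXiv:2007.03595 — 3 statements merged into one kernel-verified Lean document; each statement's English description precedes it below -/
import Mathlib

section
/- Let Y(z) = Y − zI be the translated linearization matrix, where Y is the cyclic block matrix built from n×n complex matrices X^(1),...,X^(M). If Y(z) is invertible and z ≠ 0, then the top-left n×n block of Y(z)^{-1} equals (z^{-(M-1)} X^(1)···X^(M) − zI)^{-1}. -/
open MeasureTheory ProbabilityTheory

noncomputable def euclNorm {ι : Type*} [Fintype ι] (v : ι → ℂ) : ℝ :=
  Real.sqrt (∑ i, ‖v i‖ ^ 2)

noncomputable def opNorm {ι κ : Type*} [Fintype ι] [Fintype κ] (A : Matrix ι κ ℂ) : ℝ :=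
  sSup ((fun v => euclNorm (A.mulVec v)) '' {v | euclNorm v ≤ 1})

noncomputable def sMin {ι κ : Type*} [Fintype ι] [Fintype κ] (A : Matrix ι κ ℂ) : ℝ :=
  sInf ((fun v => euclNorm (A.mulVec v)) '' {v | euclNorm v = 1})

/-- The `Mn × Mn` cyclic block linearization matrix with `X k` in block `(k, k+1)`
(indices mod `M`). -/
def cyclicY (M n : ℕ) (X : Fin M → Matrix (Fin n) (Fin n) ℂ) :
    Matrix (Fin M × Fin n) (Fin M × Fin n) ℂ :=
  fun p q => if q.1.val = (p.1.val + 1) % M then X p.1 p.2 q.2 else 0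

/-- The translated linearization `Y(z) = Y - z I`. -/
noncomputable def Ymat (M n : ℕ) (X : Fin M → Matrix (Fin n) (Fin n) ℂ) (z : ℂ) :
    Matrix (Fin M × Fin n) (Fin M × Fin n) ℂ :=
  cyclicY M n X - z • (1 : Matrix (Fin M × Fin n) (Fin M × Fin n) ℂ)

def sparseSet {ι : Type*} [Fintype ι] (a : ℝ) : Set (ι → ℂ) :=
  {x | ∃ s : Finset ι, (∀ i ∉ s, x i = 0) ∧ (s.card : ℝ) ≤ a * (Fintype.card ι)}

noncomputable def compSet {ι : Type*} [Fintype ι] (a b : ℝ) : Set (ι → ℂ) :=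
  {x | euclNorm x = 1 ∧ ∃ y ∈ sparseSet a, euclNorm (x - y) ≤ b}

noncomputable def incompSet {ι : Type*} [Fintype ι] (a b : ℝ) : Set (ι → ℂ) :=
  {x | euclNorm x = 1 ∧ x ∉ compSet a b}

noncomputable def distToSpan {ι : Type*} [Fintype ι] (x : ι → ℂ) (S : Set (ι → ℂ)) : ℝ :=
  sInf ((fun y => euclNorm (x - y)) '' (Submodule.span ℂ S : Set (ι → ℂ)))

/-!
Write `T i` for the block `(i, 0)` of `Y(z)⁻¹` (indices mod `M`). Reading `Y(z) Y(z)⁻¹ = I` block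
row by block row gives `X i T (i+1) = z T i + δ_{i0} I`. Going once around the cycle, the homogeneous
relations telescope to `X 1 ⋯ X (M-1) T 0 = z^(M-1) T 1`, and then the inhomogeneous one at `i = 0`
gives `X 0 ⋯ X (M-1) T 0 = z^(M-1) (z T 0 + I)`, i.e. `(z^(-(M-1)) X 0 ⋯ X (M-1) - z I) T 0 = I`.
-/

theorem List.prod_ofFn_mul_eq_pow_smul {R A : Type*} [Monoid R] [Monoid A] [MulAction R A]
    [SMulCommClass R A A] {m : ℕ} (X : Fin m → A) (T : Fin (m + 1) → A) (z : R)
    (h : ∀ i, X i * T i.succ = z • T i.castSucc) :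
    (List.ofFn X).prod * T (Fin.last m) = z ^ m • T 0 := by
  induction m with
  | zero => simp
  | succ m ih =>
    have htail := ih (fun i => X i.succ) (fun i => T i.succ) fun i => h i.succ
    rw [List.ofFn_succ, List.prod_cons, mul_assoc, ← Fin.succ_last, htail, mul_smul_comm, h 0,
      smul_smul, ← pow_succ, Fin.castSucc_zero]

section

variable {M n : ℕ} [NeZero M] (X : Fin M → Matrix (Fin n) (Fin n) ℂ)

theorem cyclicY_mul_submatrix (B : Matrix (Fin M × Fin n) (Fin M × Fin n) ℂ) (i j : Fin M) :
    (cyclicY M n X * B).submatrix (Prod.mk i) (Prod.mk j)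
      = X i * B.submatrix (Prod.mk (i + 1)) (Prod.mk j) := by
  have hsucc : ∀ k : Fin M, (k : ℕ) = ((i : ℕ) + 1) % M ↔ k = i + 1 := by
    intro k
    rw [Fin.ext_iff, Fin.val_add, Fin.val_one', Nat.add_mod_mod]
  ext a b
  simp [Matrix.mul_apply, Fintype.sum_prod_type, cyclicY, hsucc]

theorem Ymat_mul_submatrix (z : ℂ) (B : Matrix (Fin M × Fin n) (Fin M × Fin n) ℂ)
    (i j : Fin M) :
    (Ymat M n X z * B).submatrix (Prod.mk i) (Prod.mk j)
      = X i * B.submatrix (Prod.mk (i + 1)) (Prod.mk j)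
        - z • B.submatrix (Prod.mk i) (Prod.mk j) := by
  rw [Ymat, Matrix.sub_mul, Matrix.smul_mul, Matrix.one_mul, ← cyclicY_mul_submatrix]
  rfl

end

theorem stmt1_general (M n : ℕ) (hM : 1 ≤ M)
    (X : Fin M → Matrix (Fin n) (Fin n) ℂ) (z : ℂ) (hz : z ≠ 0)
    (hinv : IsUnit (Ymat M n X z)) :
    ∀ a b : Fin n,
      (Ymat M n X z)⁻¹ ((⟨0, hM⟩ : Fin M), a) ((⟨0, hM⟩ : Fin M), b)
        = ((z ^ (M - 1))⁻¹ • (List.ofFn X).prod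
            - z • (1 : Matrix (Fin n) (Fin n) ℂ))⁻¹ a b := by
  obtain ⟨N, rfl⟩ : ∃ N, M = N + 1 := ⟨M - 1, by omega⟩
  set T : Fin (N + 1) → Matrix (Fin n) (Fin n) ℂ :=
    fun i => (Ymat (N + 1) n X z)⁻¹.submatrix (Prod.mk i) (Prod.mk 0)
  have hrow : ∀ i, X i * T (i + 1) - z • T i = if i = 0 then 1 else 0 := by
    intro i
    rw [← Ymat_mul_submatrix, Matrix.mul_nonsing_inv _ ((Matrix.isUnit_iff_isUnit_det _).mp hinv)]
    ext a b
    by_cases hi : i = 0 <;> simp [Matrix.one_apply, hi]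
  have hcycle : (List.ofFn X).prod * T 0 = z ^ N • (z • T 0 + 1) := by
    have htail := List.prod_ofFn_mul_eq_pow_smul (fun i => X i.succ) (fun i => T (i + 1)) z
      fun i => by simpa [sub_eq_zero, Fin.succ_ne_zero] using hrow i.succ
    rw [Fin.last_add_one, zero_add] at htail
    rw [List.ofFn_succ, List.prod_cons, mul_assoc, htail, mul_smul_comm,
      ← sub_eq_iff_eq_add'.mp (by simpa using hrow 0)]
  have hinvT : ((z ^ N)⁻¹ • (List.ofFn X).prod - z • 1) * T 0 = 1 := by
    rw [Matrix.sub_mul, Matrix.smul_mul, hcycle, inv_smul_smul₀ (pow_ne_zero N hz),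
      Matrix.smul_mul, Matrix.one_mul, add_sub_cancel_left]
  intro a b
  rw [Nat.add_sub_cancel, Matrix.inv_eq_right_inv hinvT]
  rfl

/-- If `Y(z)` is invertible and `z ≠ 0`, the top-left `n × n` block of `Y(z)⁻¹`
equals `(z^{-(M-1)} X^(1)⋯X^(M) - z I)⁻¹`. -/
theorem stmt1 (M n : ℕ) (hM : 1 ≤ M) (hn : 1 ≤ n)
    (X : Fin M → Matrix (Fin n) (Fin n) ℂ) (z : ℂ) (hz : z ≠ 0)
    (hinv : IsUnit (Ymat M n X z)) :
    ∀ a b : Fin n,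
      (Ymat M n X z)⁻¹ ((⟨0, hM⟩ : Fin M), a) ((⟨0, hM⟩ : Fin M), b)
        = ((z ^ (M - 1))⁻¹ • (List.ofFn X).prod
            - z • (1 : Matrix (Fin n) (Fin n) ℂ))⁻¹ a b :=
  stmt1_general M n hM X z hz hinv
end

section
/- (Anti-concentration for the image of a fixed vector) Fix M ≥ 1 and constants c₂, C₄ > 0. Let Y(z) be the Mn×Mn translated cyclic linearization built from M independent n×n random matrices with independent centered entries having second moments ≥ c₂ and fourth moments ≤ C₄. Then there is a constant c = c(c₂,C₄,M) > 0 such that for every fixed z ∈ ℂ, unit vector u ∈ ℂ^{Mn}, and fixed vector w ∈ ℂ^{Mn}: P( ‖Y(z)u − w‖₂ ≤ c√n ) = O_{C₄,c₂}(exp(−cn)). -/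
open MeasureTheory ProbabilityTheory

/-!
Let `k` be a block carrying at least `1/M` of the mass of `u`. The `n` coordinates of
`Y(z)u - w` in block `k - 1` are `fᵢ = ∑ⱼ u(k, j) X_{k-1}(i, j) - aᵢ` with deterministic `aᵢ`;
they depend on disjoint rows of `X_{k-1}` and are therefore independent. Each satisfies
`E|fᵢ|² ≥ c₂/M` and, by a fourth-moment bound for sums of independent centred vectors,
`E|fᵢ|⁴ ≤ 8C₄ + 24 (E|fᵢ|²)²`. Paley–Zygmund then gives `P(|fᵢ|² ≥ c₂/(2M)) ≥ δ`, hence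
`E exp(-(2M/c₂)|fᵢ|²) ≤ 1 - δ/2`, and a Chernoff bound for `∑ᵢ |fᵢ|²` yields the exponential tail.
-/

open scoped ENNReal InnerProductSpace

section Moments

variable {Ω : Type*} [MeasurableSpace Ω] {μ : Measure Ω}

lemma MeasureTheory.MemLp.integrable_of_norm_le_pow {E F : Type*} [NormedAddCommGroup E]
    [NormedAddCommGroup F] [IsFiniteMeasure μ] {f : Ω → E} {g : Ω → F} {p : ℝ≥0∞} {k : ℕ}
    (hf : MemLp f p μ) (hk : (k : ℝ≥0∞) ≤ p) (hg : AEStronglyMeasurable g μ)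
    (hgf : ∀ ω, ‖g ω‖ ≤ ‖f ω‖ ^ k) : Integrable g μ :=
  (hf.mono_exponent hk).integrable_norm_pow'.mono' hg (ae_of_all _ hgf)

lemma integral_norm_sub_const_pow_four_le {F : Type*} [NormedAddCommGroup F]
    [IsProbabilityMeasure μ] {S : Ω → F} (hS : MemLp S 4 μ) (a : F) :
    ∫ ω, ‖S ω - a‖ ^ 4 ∂μ ≤ 8 * ∫ ω, ‖S ω‖ ^ 4 ∂μ + 8 * ‖a‖ ^ 4 := by
  have hS4 : Integrable (fun ω ↦ ‖S ω‖ ^ 4) μ :=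
    hS.integrable_of_norm_le_pow (k := 4) le_rfl (hS.1.norm.pow 4) (by simp)
  have hSa := hS.sub (memLp_const a)
  have hpt (ω : Ω) : ‖S ω - a‖ ^ 4 ≤ 8 * ‖S ω‖ ^ 4 + 8 * ‖a‖ ^ 4 := by
    have h := (pow_le_pow_left₀ (norm_nonneg _) (norm_sub_le (S ω) a) 4).trans
      (add_pow_le (norm_nonneg _) (norm_nonneg _) 4)
    norm_num at h
    linarith
  refine (integral_mono ?_ ((hS4.const_mul 8).fun_add (integrable_const _)) hpt).trans_eq ?_
  · exact hSa.integrable_of_norm_le_pow (k := 4) le_rfl (hSa.1.norm.pow 4) (by simp)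
  · rw [integral_add (hS4.const_mul 8) (integrable_const _), integral_const_mul]
    simp

variable {E : Type*} [NormedAddCommGroup E] [InnerProductSpace ℝ E] [MeasurableSpace E]
  [BorelSpace E]

lemma ProbabilityTheory.IndepFun.integrable_inner {X Y : Ω → E} (h : IndepFun X Y μ)
    (hX : Integrable X μ) (hY : Integrable Y μ) :
    Integrable (fun ω ↦ ⟪X ω, Y ω⟫_ℝ) μ :=
  h.integrable_bilin hX hY (innerSL ℝ)

variable [CompleteSpace E]

lemma ProbabilityTheory.IndepFun.integral_inner {X Y : Ω → E} (h : IndepFun X Y μ)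
    (hX : Integrable X μ) (hY : Integrable Y μ) :
    ∫ ω, ⟪X ω, Y ω⟫_ℝ ∂μ = ⟪μ[X], μ[Y]⟫_ℝ :=
  h.integral_bilin hX hY (innerSL ℝ)

lemma ProbabilityTheory.IndepFun.integral_norm_add_sq [IsProbabilityMeasure μ] {X Y : Ω → E}
    (h : IndepFun X Y μ) (hX : MemLp X 2 μ) (hY : MemLp Y 2 μ) (hX0 : μ[X] = 0) :
    ∫ ω, ‖X ω + Y ω‖ ^ 2 ∂μ = ∫ ω, ‖X ω‖ ^ 2 ∂μ + ∫ ω, ‖Y ω‖ ^ 2 ∂μ := by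
  have hX2 : Integrable (fun ω ↦ ‖X ω‖ ^ 2) μ :=
    hX.integrable_of_norm_le_pow (k := 2) (by norm_num) (hX.1.norm.pow 2) (by simp)
  have hY2 : Integrable (fun ω ↦ ‖Y ω‖ ^ 2) μ :=
    hY.integrable_of_norm_le_pow (k := 2) (by norm_num) (hY.1.norm.pow 2) (by simp)
  have hX1 := hX.integrable one_le_two
  have hY1 := hY.integrable one_le_two
  have hXY := h.integrable_inner hX1 hY1
  simp_rw [norm_add_sq_real]
  rw [integral_add (hX2.fun_add (hXY.const_mul 2)) hY2, integral_add hX2 (hXY.const_mul 2),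
    integral_const_mul, h.integral_inner hX1 hY1, hX0, inner_zero_left, mul_zero, add_zero]

lemma integral_norm_sub_const_sq [IsProbabilityMeasure μ] {S : Ω → E} (hS : MemLp S 2 μ)
    (hS0 : μ[S] = 0) (a : E) :
    ∫ ω, ‖S ω - a‖ ^ 2 ∂μ = ∫ ω, ‖S ω‖ ^ 2 ∂μ + ‖a‖ ^ 2 := by
  simpa [sub_eq_add_neg] using
    (indepFun_const_right S (-a)).integral_norm_add_sq hS (memLp_const _) hS0

lemma ProbabilityTheory.IndepFun.integral_norm_add_pow_four_le [IsProbabilityMeasure μ]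
    {X Y : Ω → E} (h : IndepFun X Y μ) (hX : MemLp X 4 μ) (hY : MemLp Y 4 μ)
    (hX0 : μ[X] = 0) (hY0 : μ[Y] = 0) :
    ∫ ω, ‖X ω + Y ω‖ ^ 4 ∂μ ≤ ∫ ω, ‖X ω‖ ^ 4 ∂μ
      + 6 * ((∫ ω, ‖X ω‖ ^ 2 ∂μ) * ∫ ω, ‖Y ω‖ ^ 2 ∂μ) + ∫ ω, ‖Y ω‖ ^ 4 ∂μ := by
  have hcubic : Continuous fun x : E ↦ ‖x‖ ^ 2 • x := by fun_prop
  have hsq : Measurable fun x : E ↦ ‖x‖ ^ 2 := by fun_prop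
  have hint {Z : Ω → E} (hZ : MemLp Z 4 μ) :
      Integrable Z μ ∧ Integrable (fun ω ↦ ‖Z ω‖ ^ 2) μ ∧
        Integrable (fun ω ↦ ‖Z ω‖ ^ 2 • Z ω) μ ∧ Integrable (fun ω ↦ ‖Z ω‖ ^ 4) μ :=
    ⟨hZ.integrable (by norm_num),
      hZ.integrable_of_norm_le_pow (k := 2) (by norm_num) (hZ.1.norm.pow 2) (by simp),
      hZ.integrable_of_norm_le_pow (k := 3) (by norm_num)
        (hcubic.comp_aestronglyMeasurable hZ.1)
        (fun ω ↦ by rw [norm_smul, norm_pow, norm_norm]; exact le_of_eq (by ring)),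
      hZ.integrable_of_norm_le_pow (k := 4) (by norm_num) (hZ.1.norm.pow 4) (by simp)⟩
  obtain ⟨hX1, hX2, hX3, hX4⟩ := hint hX
  obtain ⟨hY1, hY2, hY3, hY4⟩ := hint hY
  have hXY : IndepFun (fun ω ↦ ‖X ω‖ ^ 2 • X ω) Y μ := h.comp hcubic.measurable measurable_id
  have hYX : IndepFun X (fun ω ↦ ‖Y ω‖ ^ 2 • Y ω) μ := h.comp measurable_id hcubic.measurable
  have hnorms : IndepFun (fun ω ↦ ‖X ω‖ ^ 2) (fun ω ↦ ‖Y ω‖ ^ 2) μ := h.comp hsq hsq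
  have hprod : Integrable (fun ω ↦ ‖X ω‖ ^ 2 * ‖Y ω‖ ^ 2) μ := hnorms.integrable_mul hX2 hY2
  have hpt (ω : Ω) : ‖X ω + Y ω‖ ^ 4 ≤ ‖X ω‖ ^ 4 + 6 * (‖X ω‖ ^ 2 * ‖Y ω‖ ^ 2) + ‖Y ω‖ ^ 4
      + 4 * ⟪‖X ω‖ ^ 2 • X ω, Y ω⟫_ℝ + 4 * ⟪X ω, ‖Y ω‖ ^ 2 • Y ω⟫_ℝ := by
    have hCS := real_inner_mul_inner_self_le (X ω) (Y ω)
    rw [real_inner_self_eq_norm_sq, real_inner_self_eq_norm_sq] at hCS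
    rw [real_inner_smul_left, real_inner_smul_right,
      show ‖X ω + Y ω‖ ^ 4 = (‖X ω + Y ω‖ ^ 2) ^ 2 by ring, norm_add_sq_real]
    nlinarith
  have hXY' := (hXY.integrable_inner hX3 hY1).const_mul 4
  have hYX' := (hYX.integrable_inner hX1 hY3).const_mul 4
  refine (integral_mono (hint (hX.add hY)).2.2.2 (by fun_prop) hpt).trans_eq ?_
  rw [integral_add (by fun_prop) hYX', integral_add (by fun_prop) hXY',
    integral_add (by fun_prop) hY4, integral_add hX4 (by fun_prop), integral_const_mul,
    integral_const_mul, integral_const_mul, hXY.integral_inner hX3 hY1,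
    hYX.integral_inner hX1 hY3, hnorms.integral_fun_mul_eq_mul_integral hX2.1 hY2.1, hX0, hY0]
  simp

variable [SecondCountableTopology E] {ι : Type*} {ζ : ι → Ω → E}

lemma ProbabilityTheory.iIndepFun.integral_norm_sum_sq (h : iIndepFun ζ μ)
    (hm : ∀ j, Measurable (ζ j)) (hL : ∀ j, MemLp (ζ j) 2 μ) (h0 : ∀ j, μ[ζ j] = 0)
    (s : Finset ι) :
    ∫ ω, ‖∑ j ∈ s, ζ j ω‖ ^ 2 ∂μ = ∑ j ∈ s, ∫ ω, ‖ζ j ω‖ ^ 2 ∂μ := by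
  classical
  have := h.isProbabilityMeasure
  induction s using Finset.induction_on with
  | empty => simp
  | insert a s ha ih =>
    have hind := h.indepFun_finsetSum_of_notMem hm ha
    rw [Finset.sum_fn] at hind
    simp_rw [Finset.sum_insert ha, add_comm (ζ a _)]
    rw [hind.integral_norm_add_sq (memLp_finsetSum s fun j _ ↦ hL j) (hL a), ih, add_comm]
    rw [integral_finsetSum s fun j _ ↦ (hL j).integrable one_le_two]
    simp [h0]

lemma ProbabilityTheory.iIndepFun.integral_norm_sum_pow_four_le (h : iIndepFun ζ μ)
    (hm : ∀ j, Measurable (ζ j)) (hL : ∀ j, MemLp (ζ j) 4 μ) (h0 : ∀ j, μ[ζ j] = 0)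
    (s : Finset ι) :
    ∫ ω, ‖∑ j ∈ s, ζ j ω‖ ^ 4 ∂μ ≤
      ∑ j ∈ s, ∫ ω, ‖ζ j ω‖ ^ 4 ∂μ + 3 * (∑ j ∈ s, ∫ ω, ‖ζ j ω‖ ^ 2 ∂μ) ^ 2 := by
  classical
  have := h.isProbabilityMeasure
  have hL2 j : MemLp (ζ j) 2 μ := (hL j).mono_exponent (by norm_num)
  induction s using Finset.induction_on with
  | empty => simp
  | insert a s ha ih =>
    have hind := h.indepFun_finsetSum_of_notMem hm ha
    rw [Finset.sum_fn] at hind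
    have hsum0 : ∫ ω, ∑ j ∈ s, ζ j ω ∂μ = 0 := by
      rw [integral_finsetSum s fun j _ ↦ (hL j).integrable (by norm_num)]
      simp [h0]
    have h4 := hind.integral_norm_add_pow_four_le (memLp_finsetSum s fun j _ ↦ hL j) (hL a)
      hsum0 (h0 a)
    rw [h.integral_norm_sum_sq hm hL2 h0] at h4
    simp_rw [Finset.sum_insert ha, add_comm (ζ a _)]
    have ha2 : 0 ≤ ∫ ω, ‖ζ a ω‖ ^ 2 ∂μ := integral_nonneg fun ω ↦ by positivity
    nlinarith

end Moments

section AntiConcentration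

open Real

variable {Ω : Type*} [MeasurableSpace Ω] {μ : Measure Ω} [IsProbabilityMeasure μ]

lemma paley_zygmund {Q : Ω → ℝ} (hQm : Measurable Q) (hQ : Integrable Q μ)
    (hQ2 : Integrable (fun ω ↦ Q ω ^ 2) μ) {θ : ℝ} (hθ0 : 0 ≤ θ) (hθ : θ ≤ 1)
    (hm : 0 ≤ ∫ ω, Q ω ∂μ) :
    ((1 - θ) * ∫ ω, Q ω ∂μ) ^ 2 ≤
      (∫ ω, Q ω ^ 2 ∂μ) * μ.real {ω | θ * ∫ ω, Q ω ∂μ ≤ Q ω} := by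
  set m := ∫ ω, Q ω ∂μ
  set A := {ω | θ * m ≤ Q ω}
  set s := ∫ ω, Q ω ^ 2 ∂μ
  set d := (1 - θ) * m
  have hA : MeasurableSet A := measurableSet_le measurable_const hQm
  -- integrating `2 l Q ≤ 2 l θ m + l² Q² + 1_A` (AM-GM on `A`) gives a quadratic inequality in
  -- `l`, to be evaluated at `l = d / s`
  have key (l : ℝ) (hl : 0 < l) : 2 * l * d ≤ l ^ 2 * s + μ.real A := by
    have hpt (ω : Ω) : 2 * l * Q ω ≤ 2 * l * θ * m + l ^ 2 * Q ω ^ 2 + A.indicator 1 ω := by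
      by_cases hω : ω ∈ A
      · rw [Set.indicator_of_mem hω, Pi.one_apply]
        nlinarith [sq_nonneg (l * Q ω - 1), mul_nonneg (mul_nonneg hl.le hθ0) hm]
      · rw [Set.indicator_of_notMem hω]
        have : Q ω < θ * m := lt_of_not_ge hω
        nlinarith [sq_nonneg (l * Q ω)]
    have hconst : Integrable (fun _ ↦ 2 * l * θ * m) μ := integrable_const _
    have hsq := hQ2.const_mul (l ^ 2)
    have hind : Integrable (A.indicator (1 : Ω → ℝ)) μ := (integrable_const 1).indicator hA
    have hint := integral_mono (hQ.const_mul (2 * l)) ((hconst.fun_add hsq).fun_add hind) hpt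
    rw [integral_add (hconst.fun_add hsq) hind, integral_add hconst hsq] at hint
    simp only [integral_const, integral_const_mul, integral_indicator_one hA, probReal_univ,
      smul_eq_mul, one_mul] at hint
    nlinarith
  have hd : 0 ≤ d := mul_nonneg (by linarith) hm
  have hs : 0 ≤ s := integral_nonneg fun ω ↦ sq_nonneg _
  have hp : μ.real A ≤ 1 := measureReal_le_one
  rcases hd.eq_or_lt with hd0 | hd0
  · rw [← hd0, zero_pow two_ne_zero]
    exact mul_nonneg hs measureReal_nonneg
  rcases hs.eq_or_lt with hs0 | hs0
  · have := key (1 / d) (by positivity)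
    rw [← hs0] at this
    field_simp at this
    nlinarith
  have := key (d / s) (by positivity)
  field_simp at this
  nlinarith

lemma div_le_measureReal_half_integral_le {Q : Ω → ℝ} (hQm : Measurable Q)
    (hQ : Integrable Q μ) (hQ2 : Integrable (fun ω ↦ Q ω ^ 2) μ) {v A B : ℝ} (hv : 0 ≤ v)
    (hA : 0 ≤ A) (hB : 0 ≤ B) (hvm : v ≤ ∫ ω, Q ω ∂μ)
    (h2 : ∫ ω, Q ω ^ 2 ∂μ ≤ A + B * (∫ ω, Q ω ∂μ) ^ 2) :
    v ^ 2 / (4 * (A + B * v ^ 2)) ≤ μ.real {ω | 1 / 2 * ∫ ω, Q ω ∂μ ≤ Q ω} := by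
  set m := ∫ ω, Q ω ∂μ
  set p := μ.real {ω | 1 / 2 * m ≤ Q ω}
  have hPZ := paley_zygmund hQm hQ hQ2 (θ := 1 / 2) (by norm_num) (by norm_num) (hv.trans hvm)
  have hp : 0 ≤ p := measureReal_nonneg
  rcases (add_nonneg hA (mul_nonneg hB (sq_nonneg v))).eq_or_lt with hD | hD
  · rw [← hD, mul_zero, div_zero]
    exact hp
  have hvm2 : v ^ 2 ≤ m ^ 2 := pow_le_pow_left₀ hv hvm 2
  have hPZ' : m ^ 2 ≤ 4 * (A + B * m ^ 2) * p := by nlinarith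
  have hDm : A + B * v ^ 2 ≤ A + B * m ^ 2 := by gcongr
  have key : v ^ 2 * (A + B * m ^ 2) ≤ p * (4 * (A + B * v ^ 2)) * (A + B * m ^ 2) := by
    nlinarith [mul_le_mul_of_nonneg_left hvm2 hA, mul_le_mul_of_nonneg_right hPZ' hD.le]
  rw [div_le_iff₀ (by positivity)]
  exact le_of_mul_le_mul_right key (hD.trans_le hDm)

lemma integral_exp_neg_le_one_sub {Q : Ω → ℝ} (hQm : Measurable Q) (hQ0 : ∀ ω, 0 ≤ Q ω) :
    ∫ ω, exp (-Q ω) ∂μ ≤ 1 - μ.real {ω | 1 ≤ Q ω} / 2 := by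
  set A := {ω | 1 ≤ Q ω}
  have hA : MeasurableSet A := measurableSet_le measurable_const hQm
  have hpt (ω : Ω) : exp (-Q ω) ≤ 1 - A.indicator (fun _ ↦ (1 : ℝ) / 2) ω := by
    by_cases hω : ω ∈ A
    · rw [Set.indicator_of_mem hω]
      have := exp_neg_one_lt_half
      have : exp (-Q ω) ≤ exp (-1) := exp_le_exp.mpr (neg_le_neg hω)
      linarith
    · rw [Set.indicator_of_notMem hω, sub_zero, exp_le_one_iff, neg_nonpos]
      exact hQ0 ω
  have hind : Integrable (A.indicator fun _ ↦ (1 : ℝ) / 2) μ := (integrable_const _).indicator hA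
  have hexp : Integrable (fun ω ↦ exp (-Q ω)) μ :=
    .of_bound (by fun_prop) 1 (ae_of_all _ fun ω ↦ by
      rw [norm_of_nonneg (exp_pos _).le, exp_le_one_iff, neg_nonpos]
      exact hQ0 ω)
  refine (integral_mono hexp ((integrable_const (1 : ℝ)).sub' hind) hpt).trans_eq ?_
  rw [integral_sub (integrable_const 1) hind, integral_indicator_const _ hA]
  simp [div_eq_mul_inv]

lemma integral_exp_neg_mul_le_of_moments {Q : Ω → ℝ} (hQm : Measurable Q) (hQ0 : ∀ ω, 0 ≤ Q ω)
    (hQ : Integrable Q μ) (hQ2 : Integrable (fun ω ↦ Q ω ^ 2) μ) {v A B : ℝ} (hv : 0 < v)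
    (hA : 0 ≤ A) (hB : 0 ≤ B) (hvm : v ≤ ∫ ω, Q ω ∂μ)
    (h2 : ∫ ω, Q ω ^ 2 ∂μ ≤ A + B * (∫ ω, Q ω ∂μ) ^ 2) :
    ∫ ω, exp (-(2 / v * Q ω)) ∂μ ≤ 1 - v ^ 2 / (4 * (A + B * v ^ 2)) / 2 := by
  have hsub : {ω | 1 / 2 * ∫ ω, Q ω ∂μ ≤ Q ω} ⊆ {ω | 1 ≤ 2 / v * Q ω} := fun ω hω ↦ by
    simp only [Set.mem_ofPred_eq] at hω ⊢
    rw [div_mul_eq_mul_div, le_div_iff₀ hv]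
    linarith
  have hmono := measureReal_mono (μ := μ) hsub
  have hPZ := div_le_measureReal_half_integral_le hQm hQ hQ2 hv.le hA hB hvm h2
  have hexp := integral_exp_neg_le_one_sub (μ := μ) (hQm.const_mul (2 / v))
    fun ω ↦ mul_nonneg (by positivity) (hQ0 ω)
  linarith

lemma measureReal_sum_le_le_of_iIndepFun {ι : Type*} [Fintype ι] {Q : ι → Ω → ℝ}
    (h : iIndepFun Q μ) (hm : ∀ i, Measurable (Q i)) (hQ0 : ∀ i ω, 0 ≤ Q i ω) {η : ℝ}
    (hη : ∀ i, ∫ ω, exp (-Q i ω) ∂μ ≤ 1 - η) (r : ℝ) :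
    μ.real {ω | ∑ i, Q i ω ≤ r} ≤ exp (r - η * Fintype.card ι) := by
  have hint : Integrable (fun ω ↦ exp (-1 * (∑ i, Q i) ω)) μ :=
    .of_bound (by fun_prop) 1 (ae_of_all _ fun ω ↦ by
      rw [norm_of_nonneg (exp_pos _).le, exp_le_one_iff, Finset.sum_apply]
      nlinarith [Finset.sum_nonneg fun i (_ : i ∈ Finset.univ) ↦ hQ0 i ω])
  have hChernoff := measure_le_le_exp_mul_mgf r (by norm_num) hint
  rw [h.mgf_sum hm] at hChernoff
  simp only [Finset.sum_apply, one_mul, neg_neg] at hChernoff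
  refine hChernoff.trans ?_
  rw [sub_eq_add_neg, exp_add, ← neg_mul, mul_comm (-η), exp_nat_mul, ← Finset.card_univ,
    ← Finset.prod_const]
  gcongr with i
  · exact fun i _ ↦ mgf_nonneg
  · calc mgf (Q i) μ (-1) ≤ 1 - η := by simpa [mgf] using hη i
      _ ≤ exp (-η) := by linarith [add_one_le_exp (-η)]

end AntiConcentration

lemma ProbabilityTheory.iIndepFun.curry {Ω ι κ 𝓧 : Type*} [MeasurableSpace Ω] {μ : Measure Ω}
    [MeasurableSpace 𝓧] {X : ι × κ → Ω → 𝓧} (h : iIndepFun X μ) (hm : ∀ p, Measurable (X p)) :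
    iIndepFun (fun i ω j ↦ X (i, j) ω) μ := by
  have := h.isProbabilityMeasure
  have hrow (i : ι) : Measurable fun ω j ↦ X (i, j) ω := measurable_pi_lambda _ fun j ↦ hm (i, j)
  rw [iIndepFun_iff_map_fun_eq_infinitePi_map hrow]
  have _ (p : ι × κ) : IsProbabilityMeasure (μ.map (X p)) :=
    Measure.isProbabilityMeasure_map (hm p).aemeasurable
  calc μ.map (fun ω i j ↦ X (i, j) ω)
      = (μ.map fun ω p ↦ X p ω).map (MeasurableEquiv.curry ι κ 𝓧) := by
        rw [Measure.map_map (MeasurableEquiv.measurable _) (measurable_pi_lambda _ hm)]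
        rfl
    _ = Measure.infinitePi fun i ↦ Measure.infinitePi fun j ↦ μ.map (X (i, j)) := by
        rw [h.map_fun_eq_infinitePi_map hm]
        exact Measure.infinitePi_map_curry fun i j ↦ μ.map (X (i, j))
    _ = Measure.infinitePi fun i ↦ μ.map fun ω j ↦ X (i, j) ω := by
        congr with i : 1
        exact ((h.precomp (Prod.mk_right_injective i)).map_fun_eq_infinitePi_map
          fun j ↦ hm (i, j)).symm

section Rows

open Real

variable {Ω : Type*} [MeasurableSpace Ω] {μ : Measure Ω} {ι : Type*} [Fintype ι]
  {ξ : ι → Ω → ℂ}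

lemma ProbabilityTheory.iIndepFun.integral_norm_weighted_sum_sq (h : iIndepFun ξ μ)
    (hm : ∀ j, Measurable (ξ j)) (hL : ∀ j, MemLp (ξ j) 2 μ) (h0 : ∀ j, μ[ξ j] = 0)
    (c : ι → ℂ) :
    ∫ ω, ‖∑ j, c j * ξ j ω‖ ^ 2 ∂μ = ∑ j, ‖c j‖ ^ 2 * ∫ ω, ‖ξ j ω‖ ^ 2 ∂μ := by
  have := (h.comp (fun j z ↦ c j * z) fun j ↦ measurable_const_mul (c j)).integral_norm_sum_sq
    (fun j ↦ (hm j).const_mul (c j)) (fun j ↦ (hL j).const_mul (c j))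
    (fun j ↦ by simp [integral_const_mul, h0 j]) Finset.univ
  simpa [norm_mul, mul_pow, integral_const_mul] using this

lemma ProbabilityTheory.iIndepFun.integral_norm_weighted_sum_pow_four_le (h : iIndepFun ξ μ)
    (hm : ∀ j, Measurable (ξ j)) (hL : ∀ j, MemLp (ξ j) 4 μ) (h0 : ∀ j, μ[ξ j] = 0) {C₄ : ℝ}
    (hC₄ : 0 ≤ C₄) (h4 : ∀ j, ∫ ω, ‖ξ j ω‖ ^ 4 ∂μ ≤ C₄) (c : ι → ℂ) (hc : ∑ j, ‖c j‖ ^ 2 ≤ 1) :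
    ∫ ω, ‖∑ j, c j * ξ j ω‖ ^ 4 ∂μ ≤ C₄ + 3 * (∫ ω, ‖∑ j, c j * ξ j ω‖ ^ 2 ∂μ) ^ 2 := by
  have := h.isProbabilityMeasure
  have := (h.comp (fun j z ↦ c j * z) fun j ↦ measurable_const_mul (c j))
    |>.integral_norm_sum_pow_four_le (fun j ↦ (hm j).const_mul (c j))
      (fun j ↦ (hL j).const_mul (c j)) (fun j ↦ by simp [integral_const_mul, h0 j]) Finset.univ
  simp only [Function.comp_apply, norm_mul, mul_pow, integral_const_mul] at this
  rw [h.integral_norm_weighted_sum_sq hm (fun j ↦ (hL j).mono_exponent (by norm_num)) h0 c]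
  have hfour : ∑ j, ‖c j‖ ^ 4 * ∫ ω, ‖ξ j ω‖ ^ 4 ∂μ ≤ C₄ := calc
    _ ≤ ∑ j, ‖c j‖ ^ 2 * C₄ := Finset.sum_le_sum fun j _ ↦ by
        have hc1 : ‖c j‖ ^ 2 ≤ 1 :=
          (Finset.single_le_sum (fun j _ ↦ sq_nonneg ‖c j‖) (Finset.mem_univ j)).trans hc
        have : ‖c j‖ ^ 4 ≤ ‖c j‖ ^ 2 := by nlinarith [sq_nonneg ‖c j‖]
        have : 0 ≤ ∫ ω, ‖ξ j ω‖ ^ 4 ∂μ := integral_nonneg fun ω ↦ by positivity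
        nlinarith [h4 j, sq_nonneg ‖c j‖]
    _ ≤ C₄ := by rw [← Finset.sum_mul]; nlinarith
  linarith

lemma integral_exp_neg_norm_weighted_sum_sub_le (h : iIndepFun ξ μ)
    (hm : ∀ j, Measurable (ξ j)) (hL : ∀ j, MemLp (ξ j) 4 μ) (h0 : ∀ j, μ[ξ j] = 0)
    {c₂ C₄ v : ℝ} (hC₄ : 0 ≤ C₄) (h2 : ∀ j, c₂ ≤ ∫ ω, ‖ξ j ω‖ ^ 2 ∂μ)
    (h4 : ∀ j, ∫ ω, ‖ξ j ω‖ ^ 4 ∂μ ≤ C₄) (c : ι → ℂ) (hc : ∑ j, ‖c j‖ ^ 2 ≤ 1) (hv : 0 < v)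
    (hvc : v ≤ c₂ * ∑ j, ‖c j‖ ^ 2) (a : ℂ) :
    ∫ ω, exp (-(2 / v * ‖∑ j, c j * ξ j ω - a‖ ^ 2)) ∂μ ≤
      1 - v ^ 2 / (4 * (8 * C₄ + 24 * v ^ 2)) / 2 := by
  have := h.isProbabilityMeasure
  set S : Ω → ℂ := fun ω ↦ ∑ j, c j * ξ j ω
  have hSL : MemLp S 4 μ := memLp_finsetSum _ fun j _ ↦ (hL j).const_mul (c j)
  have hS0 : μ[S] = 0 := by
    rw [integral_finsetSum _ fun j _ ↦ ((hL j).const_mul (c j)).integrable (by norm_num)]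
    simp [integral_const_mul, h0]
  have hS2 := h.integral_norm_weighted_sum_sq hm (fun j ↦ (hL j).mono_exponent (by norm_num)) h0 c
  have hS4 := h.integral_norm_weighted_sum_pow_four_le hm hL h0 hC₄ h4 c hc
  have hf := hSL.sub (memLp_const a)
  have hQm : Measurable fun ω ↦ ‖S ω - a‖ ^ 2 :=
    ((Finset.measurable_sum _ fun j _ ↦ (hm j).const_mul (c j)).sub_const a).norm.pow_const 2
  have hQ : Integrable (fun ω ↦ ‖S ω - a‖ ^ 2) μ :=
    hf.integrable_of_norm_le_pow (k := 2) (by norm_num) hQm.aestronglyMeasurable (by simp)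
  have hQ2 : Integrable (fun ω ↦ (‖S ω - a‖ ^ 2) ^ 2) μ :=
    hf.integrable_of_norm_le_pow (k := 4) le_rfl (hQm.pow_const 2).aestronglyMeasurable
      (by simp [← pow_mul])
  have hf2 := integral_norm_sub_const_sq (hSL.mono_exponent (by norm_num)) hS0 a
  have hvm : v ≤ ∫ ω, ‖S ω - a‖ ^ 2 ∂μ := by
    rw [hf2, hS2]
    rw [Finset.mul_sum] at hvc
    have : ∑ j, c₂ * ‖c j‖ ^ 2 ≤ ∑ j, ‖c j‖ ^ 2 * ∫ ω, ‖ξ j ω‖ ^ 2 ∂μ :=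
      Finset.sum_le_sum fun j _ ↦ by nlinarith [h2 j, sq_nonneg ‖c j‖]
    nlinarith [sq_nonneg ‖a‖]
  have hmom : ∫ ω, (‖S ω - a‖ ^ 2) ^ 2 ∂μ ≤ 8 * C₄ + 24 * (∫ ω, ‖S ω - a‖ ^ 2 ∂μ) ^ 2 := by
    simp_rw [← pow_mul]
    have hf4 := integral_norm_sub_const_pow_four_le hSL a
    have hS2nn : 0 ≤ ∫ ω, ‖S ω‖ ^ 2 ∂μ := integral_nonneg fun ω ↦ by positivity
    rw [hf2]
    nlinarith [sq_nonneg ‖a‖, mul_nonneg hS2nn (sq_nonneg ‖a‖)]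
  exact integral_exp_neg_mul_le_of_moments hQm (fun ω ↦ by positivity) hQ hQ2 hv
    (by positivity) (by norm_num) hvm hmom

end Rows

section CyclicLinearization

open Real

lemma euclNorm_sq {ι : Type*} [Fintype ι] (v : ι → ℂ) : euclNorm v ^ 2 = ∑ i, ‖v i‖ ^ 2 :=
  sq_sqrt (Finset.sum_nonneg fun _ _ ↦ sq_nonneg _)

lemma sum_fiber_le_sum {α β : Type*} [Fintype α] [Fintype β] {f : α × β → ℝ} (hf : 0 ≤ f)
    (k : α) : ∑ j, f (k, j) ≤ ∑ p, f p := by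
  rw [Fintype.sum_prod_type]
  exact Finset.single_le_sum (f := fun k ↦ ∑ j, f (k, j))
    (fun k _ ↦ Finset.sum_nonneg fun _ _ ↦ hf _) (Finset.mem_univ k)

lemma sum_norm_sq_fiber_le_of_euclNorm_le {α β : Type*} [Fintype α] [Fintype β]
    {V : α × β → ℂ} {b : ℝ} (hb : 0 ≤ b) (h : euclNorm V ≤ b) (k : α) :
    ∑ j, ‖V (k, j)‖ ^ 2 ≤ b ^ 2 :=
  (sum_fiber_le_sum (fun p ↦ sq_nonneg ‖V p‖) k).trans ((sqrt_le_left hb).mp h)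

lemma exists_sum_div_card_le_sum_fiber {α β : Type*} [Fintype α] [Nonempty α] [Fintype β]
    (f : α × β → ℝ) : ∃ k, (∑ p, f p) / Fintype.card α ≤ ∑ j, f (k, j) := by
  obtain ⟨k, -, hk⟩ := Finset.exists_le_of_sum_le (s := Finset.univ) Finset.univ_nonempty
    (f := fun _ ↦ (∑ p, f p) / Fintype.card α) (g := fun k ↦ ∑ j, f (k, j)) (by
      rw [Finset.sum_const, Finset.card_univ, nsmul_eq_mul, mul_div_cancel₀ _ (by positivity),
        Fintype.sum_prod_type])
  exact ⟨k, hk⟩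

lemma Ymat_mulVec_apply {M n : ℕ} [NeZero M] (X : Fin M → Matrix (Fin n) (Fin n) ℂ) (z : ℂ)
    (u : Fin M × Fin n → ℂ) (k : Fin M) (i : Fin n) :
    (Ymat M n X z).mulVec u (k, i) = ∑ j, X k i j * u (k + 1, j) - z * u (k, i) := by
  have hcyc (l : Fin M) : l.val = (k.val + 1) % M ↔ l = k + 1 := by
    rw [Fin.ext_iff, Fin.val_add, Fin.val_one', Nat.add_mod_mod]
  rw [Ymat, Matrix.sub_mulVec, Matrix.smul_mulVec, Matrix.one_mulVec, Pi.sub_apply,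
    Pi.smul_apply, smul_eq_mul]
  simp [cyclicY, Matrix.mulVec, dotProduct, Fintype.sum_prod_type, hcyc, ite_mul]

lemma measureReal_sum_norm_row_sq_le {M n : ℕ} [NeZero M] {Ω : Type*} [MeasurableSpace Ω]
    {μ : Measure Ω} {X : Fin M → Ω → Matrix (Fin n) (Fin n) ℂ}
    (hXm : ∀ k i j, Measurable fun ω ↦ X k ω i j)
    (hind : iIndepFun (fun (p : Fin M × Fin n × Fin n) ω ↦ X p.1 ω p.2.1 p.2.2) μ)
    (h0 : ∀ k i j, ∫ ω, X k ω i j ∂μ = 0) (hL : ∀ k i j, MemLp (fun ω ↦ X k ω i j) 4 μ)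
    {c₂ C₄ v : ℝ} (hC₄ : 0 ≤ C₄) (h2 : ∀ k i j, c₂ ≤ ∫ ω, ‖X k ω i j‖ ^ 2 ∂μ)
    (h4 : ∀ k i j, ∫ ω, ‖X k ω i j‖ ^ 4 ∂μ ≤ C₄) (z : ℂ) (u w : Fin M × Fin n → ℂ) (k : Fin M)
    (hu : ∑ j, ‖u (k + 1, j)‖ ^ 2 ≤ 1) (hv : 0 < v) (hvu : v ≤ c₂ * ∑ j, ‖u (k + 1, j)‖ ^ 2)
    (r : ℝ) :
    μ.real {ω | ∑ i, ‖((Ymat M n (fun k ↦ X k ω) z).mulVec u - w) (k, i)‖ ^ 2 ≤ r} ≤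
      exp (2 / v * r - v ^ 2 / (4 * (8 * C₄ + 24 * v ^ 2)) / 2 * n) := by
  have := hind.isProbabilityMeasure
  have hblock : iIndepFun (fun (p : Fin n × Fin n) ω ↦ X k ω p.1 p.2) μ :=
    hind.precomp (Prod.mk_right_injective k)
  set φ : Fin n → (Fin n → ℂ) → ℝ :=
    fun i x ↦ 2 / v * ‖∑ j, u (k + 1, j) * x j - (z * u (k, i) + w (k, i))‖ ^ 2
  have hQ := (hblock.curry fun p ↦ hXm k p.1 p.2).comp φ fun i ↦ by fun_prop
  have hset : {ω | ∑ i, ‖((Ymat M n (fun k ↦ X k ω) z).mulVec u - w) (k, i)‖ ^ 2 ≤ r} =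
      {ω | ∑ i, φ i (fun j ↦ X k ω i j) ≤ 2 / v * r} := by
    ext ω
    simp only [Set.mem_ofPred_eq, φ, ← Finset.mul_sum, mul_le_mul_iff_right₀ (div_pos two_pos hv),
      Pi.sub_apply, Ymat_mulVec_apply, mul_comm (X k ω _ _), sub_sub]
  rw [hset]
  have hrow (i : Fin n) := integral_exp_neg_norm_weighted_sum_sub_le
    (hblock.precomp (Prod.mk_right_injective i)) (fun j ↦ hXm k i j) (fun j ↦ hL k i j)
    (fun j ↦ h0 k i j) hC₄ (fun j ↦ h2 k i j) (fun j ↦ h4 k i j) _ hu hv hvu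
    (z * u (k, i) + w (k, i))
  have := measureReal_sum_le_le_of_iIndepFun hQ (fun i ↦ by fun_prop)
    (fun i ω ↦ mul_nonneg (by positivity) (sq_nonneg _)) hrow (2 / v * r)
  rwa [Fintype.card_fin] at this

end CyclicLinearization

/-- Anti-concentration: for fixed `z`, a fixed unit vector `u` and a fixed
vector `w`, the image `Y(z)u` is at distance at least `c√n` from `w`, except
with probability `O(exp(-cn))`. -/
theorem stmt8 (M : ℕ) (hM : 1 ≤ M) (c₂ C₄ : ℝ) (hc₂ : 0 < c₂) (hC₄ : 0 < C₄) :
    ∃ c C : ℝ, 0 < c ∧ 0 < C ∧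
      ∀ (n : ℕ) (Ω : Type) (_mΩ : MeasurableSpace Ω) (μ : Measure Ω)
        (_ : IsProbabilityMeasure μ)
        (X : Fin M → Ω → Matrix (Fin n) (Fin n) ℂ),
        (∀ k i j, Measurable fun ω => X k ω i j) →
        iIndepFun
          (fun (p : Fin M × Fin n × Fin n) ω => X p.1 ω p.2.1 p.2.2) μ →
        (∀ k i j, ∫ ω, X k ω i j ∂μ = 0) →
        (∀ k i j, MemLp (fun ω => X k ω i j) 4 μ) →
        (∀ k i j, c₂ ≤ ∫ ω, ‖X k ω i j‖ ^ 2 ∂μ) →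
        (∀ k i j, ∫ ω, ‖X k ω i j‖ ^ 4 ∂μ ≤ C₄) →
        ∀ (z : ℂ) (u w : Fin M × Fin n → ℂ), euclNorm u = 1 →
          (μ {ω | euclNorm ((Ymat M n (fun k => X k ω) z).mulVec u - w)
                ≤ c * Real.sqrt n}).toReal
            ≤ C * Real.exp (-(c * n)) := by
  set v : ℝ := c₂ / M
  set δ : ℝ := v ^ 2 / (4 * (8 * C₄ + 24 * v ^ 2))
  set c : ℝ := min (δ / 4) (Real.sqrt (δ * v / 8))
  have hv : 0 < v := div_pos hc₂ (by exact_mod_cast hM)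
  have hδ : 0 < δ := by positivity
  have hc : 0 < c := lt_min (by positivity) (by positivity)
  have hcv : 2 / v * c ^ 2 ≤ δ / 4 := calc
    2 / v * c ^ 2 ≤ 2 / v * (δ * v / 8) := by
      gcongr
      exact (pow_le_pow_left₀ hc.le (min_le_right _ _) 2).trans (Real.sq_sqrt (by positivity)).le
    _ = δ / 4 := by field_simp; ring
  have hcδ : c ≤ δ / 4 := min_le_left _ _
  refine ⟨c, 1, hc, one_pos, fun n Ω _ μ _ X hXm hind h0 hL h2 h4 z u w hu ↦ ?_⟩
  have : NeZero M := ⟨by omega⟩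
  have hu1 : ∑ p, ‖u p‖ ^ 2 = 1 := by rw [← euclNorm_sq, hu, one_pow]
  obtain ⟨k, hk⟩ := exists_sum_div_card_le_sum_fiber fun p ↦ ‖u p‖ ^ 2
  rw [hu1, Fintype.card_fin] at hk
  have hrows := measureReal_sum_norm_row_sq_le hXm hind h0 hL hC₄.le h2 h4 z u w (k - 1)
    (by simpa [hu1] using sum_fiber_le_sum (fun p ↦ sq_nonneg ‖u p‖) k) hv
    (by
      rw [sub_add_cancel]
      exact (mul_one_div c₂ M).symm.trans_le (mul_le_mul_of_nonneg_left hk hc₂.le)) (c ^ 2 * n)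
  have hevent : {ω | euclNorm ((Ymat M n (fun k => X k ω) z).mulVec u - w) ≤ c * Real.sqrt n} ⊆
      {ω | ∑ i, ‖((Ymat M n (fun k ↦ X k ω) z).mulVec u - w) (k - 1, i)‖ ^ 2 ≤ c ^ 2 * n} :=
    fun ω hω ↦ by
      simpa [mul_pow] using sum_norm_sq_fiber_le_of_euclNorm_le (by positivity) hω (k - 1)
  calc (μ _).toReal ≤ _ := measureReal_mono hevent
    _ ≤ Real.exp (2 / v * (c ^ 2 * n) - δ / 2 * n) := hrows
    _ ≤ 1 * Real.exp (-(c * n)) := by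
      rw [one_mul, Real.exp_le_exp]
      nlinarith [mul_le_mul_of_nonneg_right hcv n.cast_nonneg,
        mul_le_mul_of_nonneg_right hcδ n.cast_nonneg]
end

section
/- (Net for compressible vectors) For a, b ∈ (0, 1/8), the set Comp_N(a,b) of unit vectors in ℂ^N within Euclidean distance b of some vector supported on at most aN coordinates admits a 2b-net (in Euclidean metric) of cardinality at most (C/(ab))^{2aN}, where C is an absolute constant. -/
open MeasureTheory ProbabilityTheory

/-!
A compressible unit vector `x` is `b`-close to a vector supported on some set `t` of exactly
`k = ⌊aN⌋` coordinates. The coordinate projection `p` of `x` onto `t` is at least as close, and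
`‖p‖² + ‖x - p‖² = 1`, so the unit vector `p / ‖p‖` lies within `b + b²` of `x`. Taking, for each
of the `(N choose k) ≤ (2e/a)^k` sets `t`, a `b/2`-net of the unit sphere of `ℂ^t ≅ ℝ^{2k}` (of size
at most `(1 + 4/b)^{2k}` by comparing volumes) gives a `2b`-net of `Comp_N(a,b)` consisting of
sparse unit vectors.
-/

open Finset Metric MeasureTheory Module
open scoped NNReal ENNReal

section Packing

variable {E : Type*} [NormedAddCommGroup E] [NormedSpace ℝ E] [FiniteDimensional ℝ E]

theorem card_le_of_isSeparated_of_norm_le {ε : ℝ≥0} (hε : 0 < ε) {s : Finset E}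
    (hs : ∀ x ∈ s, ‖x‖ ≤ 1) (hsep : IsSeparated ε (s : Set E)) :
    (#s : ℝ) ≤ (1 + 2 / ε) ^ finrank ℝ E := by
  borelize E
  set μ : Measure E := Measure.addHaar
  set d := finrank ℝ E
  have hε2 : (0 : ℝ) < ε / 2 := half_pos hε
  have hdisj : (s : Set E).PairwiseDisjoint fun p => ball p (ε / 2) := by
    intro x hx y hy hxy
    have hxy : (ε : ℝ≥0∞) < edist x y := hsep hx hy hxy
    rw [edist_nndist, ENNReal.coe_lt_coe, ← NNReal.coe_lt_coe, coe_nndist] at hxy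
    exact ball_disjoint_ball (by linarith)
  have hsub : ⋃ p ∈ s, ball p (ε / 2) ⊆ ball 0 (1 + ε / 2) := by
    refine Set.iUnion₂_subset fun p hp z hz => ?_
    rw [mem_ball, dist_eq_norm] at hz
    rw [mem_ball_zero_iff]
    linarith [norm_le_norm_add_norm_sub' z p, hs p hp]
  have hvol := measure_biUnion_finset hdisj (fun p _ => measurableSet_ball) ▸
    measure_mono (μ := μ) hsub
  simp only [Measure.addHaar_ball_of_pos μ _ hε2,
    Measure.addHaar_ball_of_pos μ _ (by positivity : (0 : ℝ) < 1 + ε / 2), sum_const,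
    nsmul_eq_mul] at hvol
  rw [← mul_assoc, ENNReal.mul_le_mul_iff_left (measure_ball_pos μ 0 one_pos).ne'
      measure_ball_lt_top.ne, ← ENNReal.ofReal_natCast, ← ENNReal.ofReal_mul (by positivity),
    ENNReal.ofReal_le_ofReal_iff (by positivity)] at hvol
  calc (#s : ℝ) = #s * (ε / 2) ^ d / (ε / 2) ^ d := by field_simp
    _ ≤ (1 + ε / 2) ^ d / (ε / 2) ^ d := by gcongr
    _ = (1 + 2 / ε) ^ d := by rw [← div_pow]; congr 1; field_simp; ring

theorem exists_finite_isCover_of_subset_closedBall {A : Set E} (hA : A ⊆ closedBall 0 1)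
    {ε : ℝ≥0} (hε : 0 < ε) :
    ∃ T ⊆ A, T.Finite ∧ (T.ncard : ℝ) ≤ (1 + 2 / ε) ^ finrank ℝ E ∧ IsCover ε A T := by
  set B : ℝ := (1 + 2 / ε) ^ finrank ℝ E
  have hsep : ∀ C ⊆ A, IsSeparated ε C → C.Finite ∧ (C.ncard : ℝ) ≤ B := by
    have hfin (s : Finset E) (hsA : ↑s ⊆ A) (hs : IsSeparated ε (s : Set E)) : (#s : ℝ) ≤ B :=
      card_le_of_isSeparated_of_norm_le hε (fun x hx => by simpa using hA (hsA hx)) hs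
    intro C hCA hC
    have hCfin : C.Finite := by
      by_contra hinf
      obtain ⟨s, hsC, hs⟩ := Set.Infinite.exists_subset_card_eq hinf (⌊B⌋₊ + 1)
      have := hfin s (hsC.trans hCA) (hC.subset hsC)
      rw [hs] at this
      push_cast at this
      linarith [Nat.lt_floor_add_one B]
    refine ⟨hCfin, ?_⟩
    rw [← hCfin.coe_toFinset, Set.ncard_coe_finset]
    exact hfin _ (by simpa) (by simpa)
  have hpack : packingNumber ε A ≠ ⊤ := by
    refine ne_top_of_le_ne_top (ENat.natCast_ne_top ⌊B⌋₊)
      (iSup₂_le fun C hCA => iSup_le fun hC => ?_)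
    obtain ⟨hCfin, hCcard⟩ := hsep C hCA hC
    rw [← hCfin.cast_ncard_eq]
    exact_mod_cast Nat.le_floor hCcard
  obtain ⟨hfin, hcard⟩ := hsep _ maximalSeparatedSet_subset isSeparated_maximalSeparatedSet
  exact ⟨_, maximalSeparatedSet_subset, hfin, hcard, isCover_maximalSeparatedSet hpack⟩

end Packing

theorem finrank_real_euclideanSpace_complex (ι : Type*) [Fintype ι] :
    finrank ℝ (EuclideanSpace ℂ ι) = 2 * Fintype.card ι := by
  rw [← finrank_mul_finrank ℝ ℂ, Complex.finrank_real_complex, finrank_euclideanSpace]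

lemma exists_finite_isCover_sphere_euclideanSpace (ι : Type*) [Fintype ι] {ε : ℝ≥0}
    (hε : 0 < ε) :
    ∃ T ⊆ sphere (0 : EuclideanSpace ℂ ι) 1, T.Finite ∧
      (T.ncard : ℝ) ≤ (1 + 2 / ε) ^ (2 * Fintype.card ι) ∧ IsCover ε (sphere 0 1) T := by
  rw [← finrank_real_euclideanSpace_complex]
  exact exists_finite_isCover_of_subset_closedBall sphere_subset_closedBall hε

lemma euclNorm_eq_norm_toLp {ι : Type*} [Fintype ι] (v : ι → ℂ) :
    euclNorm v = ‖WithLp.toLp 2 v‖ := by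
  rw [euclNorm, EuclideanSpace.norm_eq]

/-- Normalizing `p` moves it by `1 - ‖p‖ ≤ 1 - ‖p‖² = ‖x - p‖²`. -/
lemma norm_sub_inv_norm_smul_le {𝕜 E : Type*} [RCLike 𝕜] [NormedAddCommGroup E]
    [NormedSpace 𝕜 E] {x p : E} (h : ‖p‖ ^ 2 + ‖x - p‖ ^ 2 = 1) :
    ‖x - (‖p‖ : 𝕜)⁻¹ • p‖ ≤ ‖x - p‖ + ‖x - p‖ ^ 2 := by
  have hp1 : ‖p‖ ≤ 1 := by nlinarith [norm_nonneg p, sq_nonneg ‖x - p‖]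
  have hnormalize : ‖p - (‖p‖ : 𝕜)⁻¹ • p‖ ≤ 1 - ‖p‖ := by
    rcases eq_or_ne p 0 with rfl | hp0
    · simp
    refine le_of_eq ?_
    have hpos : 0 < ‖p‖ := norm_pos_iff.mpr hp0
    calc ‖p - (‖p‖ : 𝕜)⁻¹ • p‖ = ‖(((1 - ‖p‖⁻¹ : ℝ)) : 𝕜) • p‖ := by
          rw [RCLike.ofReal_sub, sub_smul, RCLike.ofReal_one, one_smul, RCLike.ofReal_inv]
      _ = (‖p‖⁻¹ - 1) * ‖p‖ := by
          rw [norm_smul, RCLike.norm_ofReal, abs_of_nonpos]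
          · ring
          · linarith [one_le_inv₀ hpos |>.mpr hp1]
      _ = 1 - ‖p‖ := by field_simp
  calc ‖x - (‖p‖ : 𝕜)⁻¹ • p‖ ≤ ‖x - p‖ + ‖p - (‖p‖ : 𝕜)⁻¹ • p‖ :=
        norm_sub_le_norm_sub_add_norm_sub _ _ _
    _ ≤ ‖x - p‖ + ‖x - p‖ ^ 2 := by nlinarith [norm_nonneg p]

section Coordinates

variable {ι : Type*} [Fintype ι] [DecidableEq ι]

noncomputable def extendByZero (t : Finset ι) :
    EuclideanSpace ℂ t →ₗᵢ[ℂ] EuclideanSpace ℂ ι where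
  toFun v := WithLp.toLp 2 fun i => if h : i ∈ t then v ⟨i, h⟩ else 0
  map_add' v w := by ext i; by_cases h : i ∈ t <;> simp [h]
  map_smul' c v := by ext i; by_cases h : i ∈ t <;> simp [h]
  norm_map' v := by
    simp only [EuclideanSpace.norm_eq, LinearMap.coe_mk, AddHom.coe_mk]
    congr 1
    rw [← sum_subset (subset_univ t) fun i _ hi => by simp [hi], ← sum_coe_sort t]
    simp

lemma extendByZero_apply (t : Finset ι) (v : EuclideanSpace ℂ t) (i : ι) :
    extendByZero t v i = if h : i ∈ t then v ⟨i, h⟩ else 0 := rfl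

def restrictLp (t : Finset ι) (x : EuclideanSpace ℂ ι) : EuclideanSpace ℂ t :=
  WithLp.toLp 2 fun i => x i

lemma extendByZero_restrictLp_apply (t : Finset ι) (x : EuclideanSpace ℂ ι) (i : ι) :
    extendByZero t (restrictLp t x) i = if i ∈ t then x i else 0 := by
  by_cases h : i ∈ t <;> simp [extendByZero_apply, restrictLp, h]

lemma norm_extendByZero_restrictLp_sq_add (t : Finset ι) (x : EuclideanSpace ℂ ι) :
    ‖extendByZero t (restrictLp t x)‖ ^ 2 + ‖x - extendByZero t (restrictLp t x)‖ ^ 2 =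
      ‖x‖ ^ 2 := by
  simp only [EuclideanSpace.norm_sq_eq, ← sum_add_distrib, PiLp.sub_apply,
    extendByZero_restrictLp_apply]
  refine sum_congr rfl fun i _ => ?_
  split_ifs <;> simp

lemma norm_sub_extendByZero_restrictLp_le {t : Finset ι} (x : EuclideanSpace ℂ ι)
    {y : EuclideanSpace ℂ ι} (hy : ∀ i ∉ t, y i = 0) :
    ‖x - extendByZero t (restrictLp t x)‖ ≤ ‖x - y‖ := by
  rw [← sq_le_sq₀ (norm_nonneg _) (norm_nonneg _)]
  simp only [EuclideanSpace.norm_sq_eq, PiLp.sub_apply, extendByZero_restrictLp_apply]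
  refine sum_le_sum fun i _ => ?_
  by_cases h : i ∈ t
  · simp [h]
  · simp [h, hy i h]

end Coordinates

section Compressible

variable {ι : Type*} [Fintype ι] [DecidableEq ι]

lemma ofLp_extendByZero_mem_compSet {a b : ℝ} (hb : 0 ≤ b) {t : Finset ι}
    (ht : (#t : ℝ) ≤ a * Fintype.card ι) {u : EuclideanSpace ℂ t} (hu : ‖u‖ = 1) :
    (extendByZero t u).ofLp ∈ compSet a b := by
  refine ⟨by simpa [euclNorm_eq_norm_toLp] using hu, (extendByZero t u).ofLp,
    ⟨t, fun i hi => ?_, ht⟩, ?_⟩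
  · simp [extendByZero_apply, hi]
  · simpa [euclNorm_eq_norm_toLp] using hb

lemma exists_extendByZero_near_of_mem_compSet {a b : ℝ} (ha : a ≤ 1) (hb : b < 1)
    {x : ι → ℂ} (hx : x ∈ compSet a b) :
    ∃ t : Finset ι, #t = ⌊a * Fintype.card ι⌋₊ ∧ ∃ u : EuclideanSpace ℂ t, ‖u‖ = 1 ∧
      ‖WithLp.toLp 2 x - extendByZero t u‖ ≤ b + b ^ 2 := by
  obtain ⟨hx1, y, ⟨s, hys, hs⟩, hxy⟩ := hx
  rw [euclNorm_eq_norm_toLp] at hx1 hxy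
  obtain ⟨t, hst, ht⟩ := exists_superset_card_eq (Nat.le_floor hs)
    (Nat.floor_le_of_le (mul_le_of_le_one_left (Nat.cast_nonneg _) ha))
  set r := restrictLp t (WithLp.toLp 2 x)
  have hclose : ‖WithLp.toLp 2 x - extendByZero t r‖ ≤ b :=
    (norm_sub_extendByZero_restrictLp_le _ (y := WithLp.toLp 2 y)
      fun i hi => hys i fun h => hi (hst h)).trans hxy
  have hpyth : ‖extendByZero t r‖ ^ 2 + ‖WithLp.toLp 2 x - extendByZero t r‖ ^ 2 = 1 := by
    rw [norm_extendByZero_restrictLp_sq_add, hx1, one_pow]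
  have hr : r ≠ 0 := by
    rintro hr
    rw [hr, map_zero, sub_zero, hx1] at hclose
    linarith
  refine ⟨t, ht, (‖r‖ : ℂ)⁻¹ • r, norm_smul_inv_norm hr, ?_⟩
  calc ‖WithLp.toLp 2 x - extendByZero t ((‖r‖ : ℂ)⁻¹ • r)‖
      = ‖WithLp.toLp 2 x - (‖extendByZero t r‖ : ℂ)⁻¹ • extendByZero t r‖ := by
        rw [map_smul, LinearIsometry.norm_map]
    _ ≤ ‖WithLp.toLp 2 x - extendByZero t r‖ + ‖WithLp.toLp 2 x - extendByZero t r‖ ^ 2 :=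
        norm_sub_inv_norm_smul_le hpyth
    _ ≤ b + b ^ 2 := by gcongr

theorem exists_finite_net_compSet {a b : ℝ} (ha0 : 0 ≤ a) (ha : a ≤ 1) (hb : 0 < b) (hb2 : b ≤ 1 / 2) :
    ∃ 𝒩 : Set (ι → ℂ), 𝒩 ⊆ compSet a b ∧ 𝒩.Finite ∧
      (𝒩.ncard : ℝ) ≤ (Fintype.card ι).choose ⌊a * Fintype.card ι⌋₊ *
        (1 + 4 / b) ^ (2 * ⌊a * Fintype.card ι⌋₊) ∧
      ∀ x ∈ compSet a b, ∃ y ∈ 𝒩, euclNorm (x - y) ≤ 2 * b := by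
  set k := ⌊a * Fintype.card ι⌋₊
  set ε : ℝ≥0 := ⟨b / 2, by positivity⟩
  have hε : (2 : ℝ) / ε = 4 / b := by change 2 / (b / 2) = 4 / b; ring
  choose T hTsphere hTfin hTcard hTcover using fun t : Finset ι =>
    exists_finite_isCover_sphere_euclideanSpace t (show 0 < ε from half_pos hb)
  let 𝒩 := ⋃ t ∈ powersetCard k univ, (fun u => (extendByZero t u).ofLp) '' T t
  refine ⟨𝒩, ?_, (finite_toSet _).biUnion fun t _ => (hTfin t).image _, ?_, ?_⟩
  · simp only [𝒩, Set.iUnion_subset_iff, Set.image_subset_iff]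
    intro t ht u hu
    refine ofLp_extendByZero_mem_compSet hb.le ?_ (mem_sphere_zero_iff_norm.mp (hTsphere t hu))
    rw [(mem_powersetCard.mp ht).2]
    exact Nat.floor_le (by positivity)
  · calc (𝒩.ncard : ℝ)
        ≤ ∑ t ∈ powersetCard k univ, (((fun u => (extendByZero t u).ofLp) '' T t).ncard : ℝ) := by
          exact_mod_cast set_ncard_biUnion_le _ _
      _ ≤ ∑ _t ∈ powersetCard k univ, (1 + 4 / b) ^ (2 * k) := by
          refine sum_le_sum fun t ht => ?_
          rw [← hε, ← (mem_powersetCard.mp ht).2, ← Fintype.card_coe]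
          exact (Nat.cast_le.mpr (Set.ncard_image_le (hTfin t))).trans (hTcard t)
      _ = (Fintype.card ι).choose k * (1 + 4 / b) ^ (2 * k) := by simp
  · intro x hx
    obtain ⟨t, ht, u, hu, hxu⟩ :=
      exists_extendByZero_near_of_mem_compSet ha (by linarith) hx
    obtain ⟨m, hm, hum⟩ : ∃ m ∈ T t, nndist u m ≤ ε := by
      simpa using isCover_iff_subset_iUnion_closedBall.mp (hTcover t)
        (mem_sphere_zero_iff_norm.mpr hu)
    refine ⟨_, Set.mem_biUnion (mem_powersetCard.mpr ⟨subset_univ t, ht⟩) ⟨m, hm, rfl⟩, ?_⟩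
    rw [euclNorm_eq_norm_toLp, WithLp.toLp_sub, WithLp.toLp_ofLp]
    calc ‖WithLp.toLp 2 x - extendByZero t m‖
        ≤ ‖WithLp.toLp 2 x - extendByZero t u‖ + ‖extendByZero t u - extendByZero t m‖ :=
          norm_sub_le_norm_sub_add_norm_sub _ _ _
      _ ≤ b + b ^ 2 + b / 2 := by
          refine add_le_add hxu ?_
          rw [← map_sub, LinearIsometry.norm_map, ← dist_eq_norm]
          exact NNReal.coe_le_coe.mpr hum
      _ ≤ 2 * b := by nlinarith

end Compressible

theorem Nat.cast_choose_floor_mul_le {a : ℝ} (ha : 0 < a) (n : ℕ) :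
    (n.choose ⌊a * n⌋₊ : ℝ) ≤ (2 * Real.exp 1 / a) ^ ⌊a * n⌋₊ := by
  set k := ⌊a * n⌋₊
  rcases Nat.eq_zero_or_pos k with hk | hk
  · simp [hk]
  have hk1 : (1 : ℝ) ≤ k := by exact_mod_cast hk
  have hnk : (n : ℝ) / k ≤ 2 / a := by
    rw [div_le_div_iff₀ (by positivity) ha]
    nlinarith [Nat.lt_floor_add_one (a * n)]
  calc (n.choose k : ℝ) ≤ n ^ k / k.factorial := Nat.choose_le_pow_div k n
    _ = (n / k) ^ k * (k ^ k / k.factorial) := by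
        rw [← mul_div_assoc, ← mul_pow, div_mul_cancel₀ _ (by positivity)]
    _ ≤ (2 / a) ^ k * Real.exp k := by
        gcongr
        exact Real.pow_div_factorial_le_exp _ k.cast_nonneg k
    _ = (2 * Real.exp 1 / a) ^ k := by rw [← Real.exp_one_pow, ← mul_pow]; ring

-- The constant `5`: `(2e/a) (5/b)² ≤ (5/(ab))²` because `2ea ≤ 1`.
theorem cast_choose_mul_pow_le {a b : ℝ} (ha : 0 < a) (ha8 : a < 1 / 8) (hb : 0 < b)
    (hb1 : b ≤ 1) (n : ℕ) :
    (n.choose ⌊a * n⌋₊ : ℝ) * (1 + 4 / b) ^ (2 * ⌊a * n⌋₊) ≤ (5 / (a * b)) ^ (2 * a * n) := by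
  set k := ⌊a * n⌋₊
  have hbase : 1 ≤ 5 / (a * b) := by
    rw [le_div_iff₀ (by positivity)]
    nlinarith
  have he : 2 * Real.exp 1 * a ≤ 1 := by nlinarith [Real.exp_one_lt_d9]
  calc (n.choose k : ℝ) * (1 + 4 / b) ^ (2 * k)
        ≤ (2 * Real.exp 1 / a) ^ k * (5 / b) ^ (2 * k) := by
        gcongr
        · exact Nat.cast_choose_floor_mul_le ha n
        · rw [le_div_iff₀ hb, add_mul, div_mul_cancel₀ _ hb.ne']
          linarith
    _ = (2 * Real.exp 1 / a * (5 / b) ^ 2) ^ k := by rw [pow_mul, ← mul_pow]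
    _ ≤ ((5 / (a * b)) ^ 2) ^ k := by
        gcongr
        rw [div_pow, div_pow, mul_pow, div_mul_div_comm,
          div_le_div_iff₀ (by positivity) (by positivity)]
        nlinarith [mul_pos (pow_pos ha 2) (pow_pos hb 2), mul_pos ha (pow_pos hb 2)]
    _ = (5 / (a * b)) ^ ((2 * k : ℕ) : ℝ) := by rw [Real.rpow_natCast, pow_mul]
    _ ≤ (5 / (a * b)) ^ (2 * a * n) := by
        refine Real.rpow_le_rpow_of_exponent_le hbase ?_
        push_cast
        linarith [Nat.floor_le (by positivity : 0 ≤ a * n)]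

/-- The set of compressible unit vectors `Comp_N(a,b)` admits a `2b`-net of
cardinality at most `(C/(ab))^{2aN}`, for an absolute constant `C`. -/
theorem stmt9 :
    ∃ C : ℝ, 0 < C ∧
      ∀ (N : ℕ) (a b : ℝ), 0 < a → a < 1 / 8 → 0 < b → b < 1 / 8 →
        ∃ 𝒩 : Set (Fin N → ℂ),
          𝒩 ⊆ compSet a b ∧ 𝒩.Finite ∧
          (𝒩.ncard : ℝ) ≤ (C / (a * b)) ^ (2 * a * (N : ℝ)) ∧
          ∀ x ∈ (compSet a b : Set (Fin N → ℂ)), ∃ y ∈ 𝒩, euclNorm (x - y) ≤ 2 * b := by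
  refine ⟨5, by norm_num, fun N a b ha ha8 hb hb8 => ?_⟩
  obtain ⟨𝒩, hsub, hfin, hcard, hcover⟩ :=
    exists_finite_net_compSet (ι := Fin N) ha.le (by linarith) hb (by linarith)
  rw [Fintype.card_fin] at hcard
  exact ⟨𝒩, hsub, hfin, hcard.trans (cast_choose_mul_pow_le ha ha8 hb (by linarith) N), hcover⟩
end
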